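/- Let α > 0 and β > 0, and let f(x) = x^{α−1}(1−x)^{β−1}/B(α,β) for 0 < x < 1 and f(x) = 0 otherwise, the density of the Beta(α, β) distribution, where B(α,β) = Γ(α)Γ(β)/Γ(α+β). Then −∫_ℝ f(x) log₂(|x| · f(x)) dx = log₂ B(α,β) + [(α+β−1)·ψ(α+β) − α·ψ(α) − (β−1)·ψ(β)] / ln 2, where ψ is the digamma function. -/

import Mathlib

open Real MeasureTheory

/-- The digamma function `ψ(x) = d/dx log Γ(x)`. -/
noncomputable def digamma (x : ℝ) : ℝ := deriv (fun t => Real.log (Real.Gamma t)) x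

/-!
Differentiating Euler's integral `B(a, b) = ∫₀¹ x^(a-1) (1-x)^(b-1) dx` in `a` under the
integral sign gives `∫₀¹ x^(a-1) (1-x)^(b-1) log x dx = B(a, b) (ψ(a) - ψ(a+b))`, and the
reflection `x ↦ 1 - x` gives the same formula for `log (1 - x)` with `a` and `b` exchanged.
On `(0, 1)` one has `log (x f(x)) = a log x + (b - 1) log (1 - x) - log B(a, b)`, so the entropy
is a linear combination of these two integrals and of `∫ f = 1`.
-/

open Set Filter Topology ProbabilityTheory

lemma hasDerivAt_Gamma_of_pos {x : ℝ} (hx : 0 < x) :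
    HasDerivAt Gamma (Gamma x * digamma x) x := by
  have hd : HasDerivAt Gamma (deriv Gamma x) x :=
    (differentiableAt_Gamma fun m => by linarith [(Nat.cast_nonneg m : (0 : ℝ) ≤ m)]).hasDerivAt
  have hψ : digamma x = deriv Gamma x / Gamma x := (hd.log (Gamma_pos_of_pos hx).ne').deriv
  rwa [hψ, mul_div_cancel₀ _ (Gamma_pos_of_pos hx).ne']

lemma hasDerivAt_beta_fst {a b : ℝ} (ha : 0 < a) (hab : 0 < a + b) :
    HasDerivAt (fun t => beta t b) (beta a b * (digamma a - digamma (a + b))) a := by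
  have hΓab : HasDerivAt (fun t => Gamma (t + b)) (Gamma (a + b) * digamma (a + b)) a :=
    (hasDerivAt_Gamma_of_pos hab).comp_add_const a b
  have hΓ := (Gamma_pos_of_pos hab).ne'
  refine (((hasDerivAt_Gamma_of_pos ha).mul_const (Gamma b)).fun_div hΓab hΓ).congr_deriv ?_
  rw [beta]
  field_simp

lemma setIntegral_Ioo_eq_intervalIntegral {E : Type*} [NormedAddCommGroup E] [NormedSpace ℝ E]
    {a b : ℝ} (hab : a ≤ b) (g : ℝ → E) : ∫ x in Ioo a b, g x = ∫ x in a..b, g x := by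
  rw [intervalIntegral.integral_of_le hab, integral_Ioc_eq_integral_Ioo]

lemma setIntegral_Ioo_zero_one_comp_one_sub {E : Type*} [NormedAddCommGroup E] [NormedSpace ℝ E]
    (g : ℝ → E) : ∫ x in Ioo 0 1, g (1 - x) = ∫ x in Ioo 0 1, g x := by
  rw [setIntegral_Ioo_eq_intervalIntegral zero_le_one,
    setIntegral_Ioo_eq_intervalIntegral zero_le_one, intervalIntegral.integral_comp_sub_left,
    sub_self, sub_zero]

lemma IntegrableOn.comp_one_sub_Ioo {E : Type*} [NormedAddCommGroup E] {g : ℝ → E}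
    (hg : IntegrableOn g (Ioo 0 1)) : IntegrableOn (fun x => g (1 - x)) (Ioo 0 1) := by
  rw [← integrableOn_Ioc_iff_integrableOn_Ioo,
    ← intervalIntegrable_iff_integrableOn_Ioc_of_le zero_le_one] at hg ⊢
  simpa using (hg.comp_sub_left 1).symm

noncomputable def betaKernel (a b x : ℝ) : ℝ := x ^ (a - 1) * (1 - x) ^ (b - 1)

@[fun_prop]
lemma measurable_betaKernel (a b : ℝ) : Measurable (betaKernel a b) := by
  unfold betaKernel
  fun_prop

lemma betaKernel_one_sub (a b x : ℝ) : betaKernel a b (1 - x) = betaKernel b a x := by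
  rw [betaKernel, betaKernel, sub_sub_cancel, mul_comm]

lemma betaKernel_pos {a b x : ℝ} (hx : x ∈ Ioo 0 1) : 0 < betaKernel a b x :=
  mul_pos (rpow_pos_of_pos hx.1 _) (rpow_pos_of_pos (sub_pos.2 hx.2) _)

lemma betaKernel_le_of_le {s t x : ℝ} (b : ℝ) (hx : x ∈ Ioo 0 1) (hst : s ≤ t) :
    betaKernel t b x ≤ betaKernel s b x :=
  mul_le_mul_of_nonneg_right (rpow_le_rpow_of_exponent_ge hx.1 hx.2.le (by linarith))
    (rpow_nonneg (sub_pos.2 hx.2).le _)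

lemma log_mul_betaKernel {a b x : ℝ} (hx : x ∈ Ioo 0 1) :
    log (x * betaKernel a b x) = a * log x + (b - 1) * log (1 - x) := by
  have h1x : 0 < 1 - x := sub_pos.2 hx.2
  rw [log_mul hx.1.ne' (betaKernel_pos hx).ne', betaKernel,
    log_mul (rpow_pos_of_pos hx.1 _).ne' (rpow_pos_of_pos h1x _).ne', log_rpow hx.1, log_rpow h1x]
  ring

lemma hasDerivAt_betaKernel_fst {x : ℝ} (hx : 0 < x) (a b : ℝ) :
    HasDerivAt (fun t => betaKernel t b x) (betaKernel a b x * log x) a := by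
  have := ((hasStrictDerivAt_const_rpow hx (a - 1)).hasDerivAt.comp_sub_const a 1).mul_const
    ((1 - x) ^ (b - 1))
  simpa only [betaKernel, mul_right_comm] using this

lemma ofReal_betaKernel {a b x : ℝ} (hx : x ∈ Icc 0 1) :
    (betaKernel a b x : ℂ) = (x : ℂ) ^ ((a : ℂ) - 1) * (1 - (x : ℂ)) ^ ((b : ℂ) - 1) := by
  rw [betaKernel, Complex.ofReal_mul, Complex.ofReal_cpow hx.1,
    Complex.ofReal_cpow (sub_nonneg.2 hx.2)]
  push_cast
  rfl

variable {a b : ℝ}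

lemma integrableOn_betaKernel (ha : 0 < a) (hb : 0 < b) :
    IntegrableOn (betaKernel a b) (Ioo 0 1) := by
  have hc := Complex.betaIntegral_convergent (u := a) (v := b) (by simpa) (by simpa)
  rw [intervalIntegrable_iff_integrableOn_Ioc_of_le zero_le_one] at hc
  refine (IntegrableOn.congr_fun hc.re (fun x hx => ?_) measurableSet_Ioc).mono_set
    Ioo_subset_Ioc_self
  rw [← ofReal_betaKernel (Ioc_subset_Icc_self hx), RCLike.re_to_complex, Complex.ofReal_re]

lemma integral_betaKernel (ha : 0 < a) (hb : 0 < b) :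
    ∫ x in Ioo 0 1, betaKernel a b x = beta a b := by
  have h : Complex.betaIntegral a b = ((∫ x in Ioo 0 1, betaKernel a b x : ℝ) : ℂ) := by
    rw [setIntegral_Ioo_eq_intervalIntegral zero_le_one, Complex.betaIntegral,
      ← intervalIntegral.integral_ofReal]
    refine intervalIntegral.integral_congr fun x hx => ?_
    rw [uIcc_of_le zero_le_one] at hx
    exact (ofReal_betaKernel hx).symm
  rw [beta_eq_betaIntegralReal a b ha hb, h, Complex.ofReal_re]

lemma norm_betaKernel_mul_log_le (ha : 0 < a) {x : ℝ} (hx : x ∈ Ioo 0 1) :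
    ‖betaKernel a b x * log x‖ ≤ 2 / a * betaKernel (a / 2) b x := by
  have hsplit : betaKernel a b x * log x = betaKernel (a / 2) b x * (log x * x ^ (a / 2)) := by
    rw [betaKernel, betaKernel, show a - 1 = (a / 2 - 1) + a / 2 by ring, rpow_add hx.1]
    ring
  rw [hsplit, norm_mul, Real.norm_of_nonneg (betaKernel_pos hx).le, mul_comm (2 / a)]
  have := (abs_log_mul_self_rpow_lt x _ hx.1 hx.2.le (half_pos ha)).le
  rw [one_div_div, ← Real.norm_eq_abs] at this
  exact mul_le_mul_of_nonneg_left this (betaKernel_pos hx).le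

lemma integrableOn_betaKernel_mul_log (ha : 0 < a) (hb : 0 < b) :
    IntegrableOn (fun x => betaKernel a b x * log x) (Ioo 0 1) :=
  ((integrableOn_betaKernel (half_pos ha) hb).const_mul (2 / a)).mono'
    (by fun_prop) (ae_restrict_of_forall_mem measurableSet_Ioo fun _ hx =>
      norm_betaKernel_mul_log_le ha hx)

lemma hasDerivAt_integral_betaKernel_fst (ha : 0 < a) (hb : 0 < b) :
    HasDerivAt (fun t => ∫ x in Ioo 0 1, betaKernel t b x)
      (∫ x in Ioo 0 1, betaKernel a b x * log x) a := by
  have hbound : ∀ᵐ x ∂volume.restrict (Ioo 0 1), ∀ t ∈ Metric.ball a (a / 2),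
      ‖betaKernel t b x * log x‖ ≤ ‖betaKernel (a / 2) b x * log x‖ :=
    ae_restrict_of_forall_mem measurableSet_Ioo fun x hx t ht => by
      have hat : a / 2 ≤ t := by
        rw [Metric.mem_ball, Real.dist_eq, abs_lt] at ht
        linarith
      rw [norm_mul, norm_mul, Real.norm_of_nonneg (betaKernel_pos hx).le,
        Real.norm_of_nonneg (betaKernel_pos hx).le]
      gcongr
      exact betaKernel_le_of_le b hx hat
  exact (hasDerivAt_integral_of_dominated_loc_of_deriv_le (Metric.ball_mem_nhds a (half_pos ha))
    (.of_forall fun t => (measurable_betaKernel t b).aestronglyMeasurable)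
    (integrableOn_betaKernel ha hb) (by fun_prop) hbound
    (integrableOn_betaKernel_mul_log (half_pos ha) hb).norm
    (ae_restrict_of_forall_mem measurableSet_Ioo fun x hx t _ =>
      hasDerivAt_betaKernel_fst hx.1 t b)).2

lemma integral_betaKernel_mul_log (ha : 0 < a) (hb : 0 < b) :
    ∫ x in Ioo 0 1, betaKernel a b x * log x = beta a b * (digamma a - digamma (a + b)) := by
  have hev : (fun t => ∫ x in Ioo 0 1, betaKernel t b x) =ᶠ[𝓝 a] fun t => beta t b := by
    filter_upwards [Ioi_mem_nhds ha] with t ht using integral_betaKernel ht hb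
  exact (hasDerivAt_integral_betaKernel_fst ha hb).unique
    ((hasDerivAt_beta_fst ha (add_pos ha hb)).congr_of_eventuallyEq hev)

lemma integrableOn_betaKernel_mul_log_one_sub (ha : 0 < a) (hb : 0 < b) :
    IntegrableOn (fun x => betaKernel a b x * log (1 - x)) (Ioo 0 1) := by
  simpa only [betaKernel_one_sub, sub_sub_cancel] using
    IntegrableOn.comp_one_sub_Ioo (integrableOn_betaKernel_mul_log hb ha)

lemma integral_betaKernel_mul_log_one_sub (ha : 0 < a) (hb : 0 < b) :
    ∫ x in Ioo 0 1, betaKernel a b x * log (1 - x)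
      = beta a b * (digamma b - digamma (a + b)) := by
  rw [← setIntegral_Ioo_zero_one_comp_one_sub]
  simp only [betaKernel_one_sub, sub_sub_cancel]
  rw [integral_betaKernel_mul_log hb ha, beta, beta, mul_comm (Gamma b), add_comm b]

lemma integrableOn_betaKernel_mul_log_mul_self (ha : 0 < a) (hb : 0 < b) :
    IntegrableOn (fun x => betaKernel a b x * log (x * betaKernel a b x)) (Ioo 0 1) :=
  IntegrableOn.congr_fun (((integrableOn_betaKernel_mul_log ha hb).const_mul a).add
    ((integrableOn_betaKernel_mul_log_one_sub ha hb).const_mul (b - 1)))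
    (fun x hx => by rw [Pi.add_apply, log_mul_betaKernel hx]; ring) measurableSet_Ioo

lemma integral_betaKernel_mul_log_mul_self (ha : 0 < a) (hb : 0 < b) :
    ∫ x in Ioo 0 1, betaKernel a b x * log (x * betaKernel a b x)
      = beta a b *
          (a * (digamma a - digamma (a + b)) + (b - 1) * (digamma b - digamma (a + b))) := by
  calc ∫ x in Ioo 0 1, betaKernel a b x * log (x * betaKernel a b x)
      = ∫ x in Ioo 0 1, (a * (betaKernel a b x * log x)
          + (b - 1) * (betaKernel a b x * log (1 - x))) :=
        setIntegral_congr_fun measurableSet_Ioo fun x hx => by rw [log_mul_betaKernel hx]; ring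
    _ = _ := by
      rw [integral_add ((integrableOn_betaKernel_mul_log ha hb).const_mul a)
        ((integrableOn_betaKernel_mul_log_one_sub ha hb).const_mul (b - 1)),
        integral_const_mul, integral_const_mul, integral_betaKernel_mul_log ha hb,
        integral_betaKernel_mul_log_one_sub ha hb]
      ring

/-- Differential floating-point entropy of the Beta distribution. -/
theorem fp_entropy_beta
    (α β : ℝ) (hα : 0 < α) (hβ : 0 < β)
    (B : ℝ) (hB : B = Real.Gamma α * Real.Gamma β / Real.Gamma (α + β))
    (f : ℝ → ℝ)
    (hf : ∀ x, f x = if 0 < x ∧ x < 1 then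
      x ^ (α - 1) * (1 - x) ^ (β - 1) / B else 0) :
    -∫ x, f x * Real.logb 2 (|x| * f x)
      = Real.logb 2 B
        + ((α + β - 1) * digamma (α + β) - α * digamma α
            - (β - 1) * digamma β) / Real.log 2 := by
  replace hB : B = beta α β := hB
  have hBpos : 0 < B := hB ▸ beta_pos hα hβ
  have hzero : ∀ x ∉ Ioo (0 : ℝ) 1, f x * logb 2 (|x| * f x) = 0 := fun x hx => by
    rw [hf x, if_neg (show ¬(0 < x ∧ x < 1) from hx), zero_mul]
  have hIoo : ∀ x ∈ Ioo (0 : ℝ) 1, f x * logb 2 (|x| * f x)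
      = (betaKernel α β x * log (x * betaKernel α β x) - log B * betaKernel α β x)
          / (B * log 2) := fun x hx => by
    have hfx : f x = betaKernel α β x / B := by
      rw [hf x, if_pos (show 0 < x ∧ x < 1 from hx), betaKernel]
    rw [hfx, abs_of_pos hx.1, ← mul_div_assoc, logb,
      log_div (mul_pos hx.1 (betaKernel_pos hx)).ne' hBpos.ne']
    field_simp
  rw [← setIntegral_eq_integral_of_forall_compl_eq_zero hzero,
    setIntegral_congr_fun measurableSet_Ioo hIoo, integral_div,
    integral_sub (integrableOn_betaKernel_mul_log_mul_self hα hβ)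
      ((integrableOn_betaKernel hα hβ).const_mul _), integral_const_mul,
    integral_betaKernel_mul_log_mul_self hα hβ, integral_betaKernel hα hβ, ← hB, logb]
  field_simp
  ring
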